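/- Context merging is stable: if declarations d1 occurs before d2 in Ψ (or both in Φ), then d1 occurs before d2 in the merge Ψ ⋈ Φ, assuming all declarations in Ψ and Φ are distinct. -/

import Mathlib

/-! Merging only interleaves its arguments: each of them is a sublist of the merge, by induction
along `mergeRev` and because reversal preserves sublists. Occurring before is the same as
`[d1, d2]` being a sublist, and so it is inherited by any list containing the context as a sublist. -/

/-- A context declaration: a variable name together with its level. -/
structure Decl where
  name : ℕ
  level : ℕ
deriving DecidableEq

/-- Right-to-left merge on reversed contexts (head = rightmost declaration). -/
def mergeRev : List Decl → List Decl → List Decl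
  | [], Φ => Φ
  | Ψ, [] => Ψ
  | x :: Ψ, y :: Φ =>
    if y.level ≤ x.level then y :: mergeRev (x :: Ψ) Φ
    else x :: mergeRev Ψ (y :: Φ)
termination_by Ψ Φ => Ψ.length + Φ.length

/-- Context merging `Ψ ⋈ Φ`, defined recursively from the right ends:
`(Ψ, x) ⋈ (Φ, y)` places `y` last if `level y ≤ level x`, else places `x` last. -/
def merge (Ψ Φ : List Decl) : List Decl :=
  (mergeRev Ψ.reverse Φ.reverse).reverse

/-- Chopping `Ψ↾n`: remove trailing declarations of level `< n`,
stopping at the first declaration (from the right) of level `≥ n`. -/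
def chop (Ψ : List Decl) (n : ℕ) : List Decl :=
  (Ψ.reverse.dropWhile (fun d => d.level < n)).reverse

/-- A context is well-ordered if its levels are non-increasing left to right. -/
def SortedCtx (Ψ : List Decl) : Prop :=
  (Ψ.map Decl.level).Pairwise (· ≥ ·)

/-- `d1` occurs (strictly) before `d2` in the list `l`. -/
def Before (l : List Decl) (d1 d2 : Decl) : Prop :=
  ∃ i j : Fin l.length, i < j ∧ l.get i = d1 ∧ l.get j = d2

open scoped List

theorem sublist_mergeRev_left (Ψ Φ : List Decl) : Ψ <+ mergeRev Ψ Φ := by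
  fun_induction mergeRev Ψ Φ with
  | case1 => exact List.nil_sublist _
  | case2 => exact List.Sublist.refl _
  | case3 x _ y _ _ ih => exact ih.cons y
  | case4 x _ _ _ _ ih => exact ih.cons_cons x

theorem sublist_mergeRev_right (Ψ Φ : List Decl) : Φ <+ mergeRev Ψ Φ := by
  fun_induction mergeRev Ψ Φ with
  | case1 => exact List.Sublist.refl _
  | case2 => exact List.nil_sublist _
  | case3 _ _ y _ _ ih => exact ih.cons_cons y
  | case4 x _ _ _ _ ih => exact ih.cons x

theorem sublist_merge_left (Ψ Φ : List Decl) : Ψ <+ merge Ψ Φ := by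
  simpa only [merge, List.reverse_reverse] using (sublist_mergeRev_left Ψ.reverse Φ.reverse).reverse

theorem sublist_merge_right (Ψ Φ : List Decl) : Φ <+ merge Ψ Φ := by
  simpa only [merge, List.reverse_reverse] using (sublist_mergeRev_right Ψ.reverse Φ.reverse).reverse

theorem before_iff_pair_sublist {l : List Decl} {d1 d2 : Decl} :
    Before l d1 d2 ↔ [d1, d2] <+ l := by
  rw [List.sublist_iff_exists_fin_orderEmbedding_get_eq]
  constructor
  · rintro ⟨i, j, hij, rfl, rfl⟩
    refine ⟨OrderEmbedding.ofStrictMono ![i, j] ?_, ?_⟩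
    · simpa [Fin.strictMono_iff_lt_succ] using hij
    · intro k
      fin_cases k <;> rfl
  · rintro ⟨f, hf⟩
    exact ⟨f 0, f 1, f.strictMono Fin.zero_lt_one, (hf 0).symm, (hf 1).symm⟩

theorem merge_stable_general (Ψ Φ : List Decl) (d1 d2 : Decl)
    (h : Before Ψ d1 d2 ∨ Before Φ d1 d2) :
    Before (merge Ψ Φ) d1 d2 := by
  simp only [before_iff_pair_sublist] at h ⊢
  rcases h with h | h
  · exact h.trans (sublist_merge_left Ψ Φ)
  · exact h.trans (sublist_merge_right Ψ Φ)

/-- Merging is stable: relative order of declarations coming from the same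
context is preserved, assuming all declarations are distinct. -/
theorem merge_stable (Ψ Φ : List Decl) (d1 d2 : Decl)
    (hnd : (Ψ ++ Φ).Nodup)
    (h : Before Ψ d1 d2 ∨ Before Φ d1 d2) :
    Before (merge Ψ Φ) d1 d2 :=
  merge_stable_general Ψ Φ d1 d2 h
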